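/- Let P satisfy Assumption (A) with constants ρ ∈ (0,1), C0 < ∞ and function V, and assume ⦀P^n − π⦀_V ≤ ρ^n for all n (absorbing the constant). Then for every k ≥ 2, ⦀L^(a_k) − π⦀_V ≤ exp(−u_k) ⦀L^(a_{k−1}) − π⦀_V, where u_k = log(a_k) − log(c + a_{k−1}) and c = 1/(1−ρ). -/

import Mathlib

/-!
Write `s = a_{k-1}` and `t = a_k`. No resampling happens strictly between them, so
`L^(s+m) = L^(s) P^m` for `m < t - s`, and the resampling rule at `s` turns the average defining
`L^(t)` into `t⁻¹ (s L^(s) + ∑_{m < t-s} L^(s) P^m)`. As `π` is invariant,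
`L^(s) P^m - π = (L^(s) - π)(P^m - π)` has `V`-norm at most `ρ^m ⦀L^(s) - π⦀_V`, and summing the
geometric series gives the factor `(s + 1/(1-ρ)) / t = exp(-u_k)`. All these manipulations need
the laws involved to integrate `V`, which the `V`-norm bounds themselves provide after
truncating `V`.
-/

open MeasureTheory Filter
open scoped ENNReal

namespace ResamplingContraction

variable {X : Type*} [MeasurableSpace X]

/-- `iter P n` is the `n`-step transition kernel `P^n`. -/
noncomputable def iter (P : X → Measure X) : ℕ → X → Measure X
  | 0 => fun x => Measure.dirac x
  | n + 1 => fun x => (iter P n x).bind P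

open ProbabilityTheory Topology

section Bind

variable {α β : Type*} [MeasurableSpace α] [MeasurableSpace β]

lemma integral_bind {μ : Measure α} {κ : α → Measure β} (hκ : Measurable κ) {f : β → ℝ}
    (hf : Integrable f (μ.bind κ)) : ∫ z, f z ∂(μ.bind κ) = ∫ y, ∫ z, f z ∂(κ y) ∂μ := by
  let K : Kernel α β := ⟨κ, hκ⟩
  rw [show μ.bind κ = μ.bind K from rfl, Measure.comp_eq_comp_const_apply] at hf ⊢
  exact Kernel.integral_comp hf

lemma measurable_integral_of_measurable {κ : α → Measure β} (hκ : Measurable κ) {f : β → ℝ}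
    (hf : Measurable f) : Measurable fun y => ∫ z, f z ∂(κ y) :=
  (hf.stronglyMeasurable.integral_kernel (κ := ⟨κ, hκ⟩)).measurable

lemma integrable_bind_iff {μ : Measure α} {κ : α → Measure β} (hκ : Measurable κ) {f : β → ℝ}
    (hf : Measurable f) : Integrable f (μ.bind κ) ↔
      (∀ᵐ y ∂μ, Integrable f (κ y)) ∧ Integrable (fun y => ∫ z, |f z| ∂(κ y)) μ :=
  Measure.integrable_comp_iff (κ := ⟨κ, hκ⟩) hf.aestronglyMeasurable

end Bind

/-- `⦀μ - ν⦀_V ≤ c`. -/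
def VDistLE (V : X → ℝ) (μ ν : Measure X) (c : ℝ) : Prop :=
  ∀ f : X → ℝ, Measurable f → (∀ x, |f x| ≤ V x) → |∫ y, f y ∂μ - ∫ y, f y ∂ν| ≤ c

section VDist

variable {V : X → ℝ} {μ ν π : Measure X} {c : ℝ}

lemma VDistLE.symm (h : VDistLE V μ ν c) : VDistLE V ν μ c := fun f hf hfV => by
  rw [abs_sub_comm]; exact h f hf hfV

lemma VDistLE.mono (h : VDistLE V μ ν c) {c' : ℝ} (hc : c ≤ c') : VDistLE V μ ν c' :=
  fun f hf hfV => (h f hf hfV).trans hc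

lemma VDistLE.nonneg (h : VDistLE V μ ν c) (hV0 : 0 ≤ V) : 0 ≤ c :=
  (abs_nonneg _).trans (h 0 measurable_const fun x => by simpa using hV0 x)

lemma VDistLE.smul (h : VDistLE V μ ν c) (r : ℝ≥0∞) : VDistLE V (r • μ) (r • ν) (r.toReal * c) :=
  fun f hf hfV => by
    rw [integral_smul_measure, integral_smul_measure, smul_eq_mul, smul_eq_mul, ← mul_sub,
      abs_mul, ENNReal.abs_toReal]
    exact mul_le_mul_of_nonneg_left (h f hf hfV) ENNReal.toReal_nonneg

lemma integrable_of_abs_le {f : X → ℝ} (hV : Integrable V μ) (hf : Measurable f)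
    (hfV : ∀ x, |f x| ≤ V x) : Integrable f μ :=
  hV.mono' hf.aestronglyMeasurable (ae_of_all _ hfV)

lemma VDistLE.add {μ' ν' : Measure X} {c' : ℝ} (h : VDistLE V μ ν c) (h' : VDistLE V μ' ν' c')
    (hμ : Integrable V μ) (hν : Integrable V ν) (hμ' : Integrable V μ') (hν' : Integrable V ν') :
    VDistLE V (μ + μ') (ν + ν') (c + c') := fun f hf hfV => by
  rw [integral_add_measure (integrable_of_abs_le hμ hf hfV) (integrable_of_abs_le hμ' hf hfV),
    integral_add_measure (integrable_of_abs_le hν hf hfV) (integrable_of_abs_le hν' hf hfV),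
    add_sub_add_comm]
  exact (abs_add_le _ _).trans (add_le_add (h f hf hfV) (h' f hf hfV))

lemma VDistLE.finsetSum {ι : Type*} {s : Finset ι} {μ ν : ι → Measure X} {c : ι → ℝ}
    (h : ∀ i ∈ s, VDistLE V (μ i) (ν i) (c i)) (hμ : ∀ i ∈ s, Integrable V (μ i))
    (hν : ∀ i ∈ s, Integrable V (ν i)) :
    VDistLE V (∑ i ∈ s, μ i) (∑ i ∈ s, ν i) (∑ i ∈ s, c i) := fun f hf hfV => by
  rw [integral_finsetSum_measure fun i hi => integrable_of_abs_le (hμ i hi) hf hfV,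
    integral_finsetSum_measure fun i hi => integrable_of_abs_le (hν i hi) hf hfV,
    ← Finset.sum_sub_distrib]
  exact (Finset.abs_sum_le_sum_abs _ _).trans (Finset.sum_le_sum fun i hi => h i hi f hf hfV)

lemma integrable_of_integral_min_le [IsFiniteMeasure μ] (hV : Measurable V) (hV0 : 0 ≤ V)
    {C : ℝ} (h : ∀ N : ℕ, ∫ x, min (V x) N ∂μ ≤ C) : Integrable V μ := by
  have hmin_nonneg (N : ℕ) : 0 ≤ fun x => min (V x) (N : ℝ) := fun x => le_min (hV0 x) N.cast_nonneg
  have hmin_int (N : ℕ) : Integrable (fun x => min (V x) (N : ℝ)) μ :=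
    (integrable_const (N : ℝ)).mono' (hV.min measurable_const).aestronglyMeasurable
      (ae_of_all _ fun x => by
        rw [Real.norm_of_nonneg (hmin_nonneg N x)]; exact min_le_right _ _)
  have hlim : Tendsto (fun N : ℕ => ∫⁻ x, ENNReal.ofReal (min (V x) N) ∂μ) atTop
      (𝓝 (∫⁻ x, ENNReal.ofReal (V x) ∂μ)) := by
    refine lintegral_tendsto_of_tendsto_of_monotone
      (fun N => (hV.min measurable_const).ennreal_ofReal.aemeasurable)
      (ae_of_all _ fun x N M hNM =>
        ENNReal.ofReal_le_ofReal (min_le_min_left (V x) (Nat.cast_le.2 hNM)))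
      (ae_of_all _ fun x => tendsto_atTop_of_eventually_const (i₀ := ⌈V x⌉₊) fun N hN => ?_)
    rw [min_eq_left ((Nat.le_ceil _).trans (by exact_mod_cast hN))]
  refine ⟨hV.aestronglyMeasurable, (hasFiniteIntegral_iff_ofReal (ae_of_all _ hV0)).2 ?_⟩
  refine lt_of_le_of_lt (le_of_tendsto' hlim fun N => ?_) (ENNReal.ofReal_lt_top (r := C))
  rw [← ofReal_integral_eq_lintegral_ofReal (hmin_int N) (ae_of_all _ (hmin_nonneg N))]
  exact ENNReal.ofReal_le_ofReal (h N)

lemma VDistLE.integrable (h : VDistLE V μ ν c) [IsFiniteMeasure μ] (hV : Measurable V)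
    (hV0 : 0 ≤ V) (hν : Integrable V ν) : Integrable V μ := by
  refine integrable_of_integral_min_le hV hV0 (C := ∫ x, V x ∂ν + c) fun N => ?_
  have hmin_le : ∀ x, |min (V x) (N : ℝ)| ≤ V x := fun x => by
    rw [abs_of_nonneg (le_min (hV0 x) N.cast_nonneg)]; exact min_le_left _ _
  have hmin := h _ (hV.min measurable_const) hmin_le
  have hν_min : ∫ x, min (V x) (N : ℝ) ∂ν ≤ ∫ x, V x ∂ν :=
    integral_mono (integrable_of_abs_le hν (hV.min measurable_const) hmin_le) hν
      fun x => min_le_left _ _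
  linarith [le_abs_self (∫ x, min (V x) (N : ℝ) ∂μ - ∫ x, min (V x) (N : ℝ) ∂ν)]

end VDist

section VDistBind

variable {V : X → ℝ} {μ π : Measure X} {κ : X → Measure X}

lemma integrable_bind_of_VDistLE (hκ : Measurable κ) [∀ y, IsFiniteMeasure (κ y)]
    [IsFiniteMeasure μ] (hV : Measurable V) (hV0 : 0 ≤ V) (hπ : Integrable V π)
    (hμ : Integrable V μ) {r : ℝ} (hκπ : ∀ y, VDistLE V (κ y) π (r * V y)) :
    Integrable V (μ.bind κ) := by
  refine (integrable_bind_iff hκ hV).2 ⟨ae_of_all _ fun y => (hκπ y).integrable hV hV0 hπ, ?_⟩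
  simp_rw [abs_of_nonneg (hV0 _)]
  refine ((integrable_const (∫ z, V z ∂π)).add (hμ.const_mul r)).mono'
    (measurable_integral_of_measurable hκ hV).aestronglyMeasurable (ae_of_all _ fun y => ?_)
  have hy := hκπ y V hV fun x => (abs_of_nonneg (hV0 x)).le
  rw [Real.norm_of_nonneg (integral_nonneg hV0), Pi.add_apply]
  linarith [le_abs_self (∫ z, V z ∂κ y - ∫ z, V z ∂π)]

/-- By invariance, `μκ - π = (μ - π)(κ - π)`: test `μ - π` against `(κ f - π f) / r`. -/
lemma VDistLE.bind [IsProbabilityMeasure μ] [IsProbabilityMeasure π] (hκ : Measurable κ)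
    [∀ y, IsProbabilityMeasure (κ y)] (hV : Measurable V) (hV0 : 0 ≤ V) (hπ : Integrable V π)
    (hπκ : π.bind κ = π) {r : ℝ} (hr : 0 < r) (hκπ : ∀ y, VDistLE V (κ y) π (r * V y))
    {B : ℝ} (hμ : VDistLE V μ π B) : VDistLE V (μ.bind κ) π (r * B) := by
  intro f hf hfV
  have hμV : Integrable V μ := hμ.integrable hV hV0 hπ
  set h : X → ℝ := fun y => ∫ z, f z ∂κ y
  have hh_meas : Measurable h := measurable_integral_of_measurable hκ hf
  have hh : ∀ y, |h y - ∫ z, f z ∂π| ≤ r * V y := fun y => hκπ y f hf hfV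
  have hh_int : ∀ ν : Measure X, [IsFiniteMeasure ν] → Integrable V ν → Integrable h ν :=
    fun ν _ hν => ((hν.const_mul r).add (integrable_const |∫ z, f z ∂π|)).mono'
      hh_meas.aestronglyMeasurable (ae_of_all _ fun y => by
        rw [Real.norm_eq_abs, Pi.add_apply]
        linarith [abs_sub_abs_le_abs_sub (h y) (∫ z, f z ∂π), hh y])
  have hμ_bind : ∫ z, f z ∂(μ.bind κ) = ∫ y, h y ∂μ := integral_bind hκ
    (integrable_of_abs_le (integrable_bind_of_VDistLE hκ hV hV0 hπ hμV hκπ) hf hfV)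
  have hπ_bind : ∫ z, f z ∂π = ∫ y, h y ∂π := by
    conv_lhs => rw [← hπκ]
    exact integral_bind hκ (by rw [hπκ]; exact integrable_of_abs_le hπ hf hfV)
  set g : X → ℝ := fun y => r⁻¹ * (h y - ∫ z, f z ∂π) with g_def
  have hg_int : ∀ ν : Measure X, [IsProbabilityMeasure ν] → Integrable V ν →
      ∫ y, g y ∂ν = r⁻¹ * (∫ y, h y ∂ν - ∫ z, f z ∂π) := fun ν _ hν => by
    rw [integral_const_mul, integral_sub (hh_int ν hν) (integrable_const _), integral_const,
      probReal_univ, one_smul]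
  have hg := hμ g ((hh_meas.sub measurable_const).const_mul _) fun y => by
    rw [g_def, abs_mul, abs_inv, abs_of_pos hr, inv_mul_le_iff₀ hr]; exact hh y
  rwa [hg_int μ hμV, hg_int π hπ, ← mul_sub, sub_sub_sub_cancel_right, abs_mul, abs_inv,
    abs_of_pos hr, inv_mul_le_iff₀ hr, ← hμ_bind, ← hπ_bind] at hg

end VDistBind

section Average

variable {V : X → ℝ}

lemma inv_smul_natCast_smul_add_sum_const {s t : ℕ} (hst : s ≤ t) (ht : t ≠ 0) (π : Measure X) :
    (t : ℝ≥0∞)⁻¹ • ((s : ℝ≥0∞) • π + ∑ _m ∈ Finset.range (t - s), π) = π := by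
  rw [Finset.sum_const, Finset.card_range, ← Nat.cast_smul_eq_nsmul ℝ≥0∞, ← add_smul,
    ← Nat.cast_add, Nat.add_sub_cancel' hst, smul_smul,
    ENNReal.inv_mul_cancel (Nat.cast_ne_zero.2 ht) (ENNReal.natCast_ne_top t), one_smul]

lemma VDistLE.inv_smul_natCast_smul_add_sum {s t : ℕ} (hst : s ≤ t) (ht : t ≠ 0)
    {μ₀ π : Measure X} {μ : ℕ → Measure X} {c₀ : ℝ} {c : ℕ → ℝ} (h₀ : VDistLE V μ₀ π c₀)
    (h : ∀ m ∈ Finset.range (t - s), VDistLE V (μ m) π (c m)) (hμ₀ : Integrable V μ₀)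
    (hμ : ∀ m ∈ Finset.range (t - s), Integrable V (μ m)) (hπ : Integrable V π) :
    VDistLE V ((t : ℝ≥0∞)⁻¹ • ((s : ℝ≥0∞) • μ₀ + ∑ m ∈ Finset.range (t - s), μ m)) π
      ((t : ℝ)⁻¹ * (s * c₀ + ∑ m ∈ Finset.range (t - s), c m)) := by
  have key := ((h₀.smul s).add (VDistLE.finsetSum h hμ fun _ _ => hπ)
    (hμ₀.smul_measure (ENNReal.natCast_ne_top s)) (hπ.smul_measure (ENNReal.natCast_ne_top s))
    (integrable_finsetSum_measure.2 hμ) (integrable_finsetSum_measure.2 fun _ _ => hπ)).smul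
    (t : ℝ≥0∞)⁻¹
  rwa [inv_smul_natCast_smul_add_sum_const hst ht, ENNReal.toReal_inv, ENNReal.toReal_natCast,
    ENNReal.toReal_natCast] at key

end Average

section Chain

variable {P : X → Measure X}

lemma measurable_iter (hP : Measurable P) : ∀ n, Measurable (iter P n)
  | 0 => Measure.measurable_dirac
  | n + 1 => (Measure.measurable_bind' hP).comp (measurable_iter hP n)

lemma isProbabilityMeasure_iter (hP : Measurable P) [∀ x, IsProbabilityMeasure (P x)] :
    ∀ n x, IsProbabilityMeasure (iter P n x)
  | 0, x => by rw [iter]; infer_instance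
  | n + 1, x =>
    have := isProbabilityMeasure_iter hP n x
    isProbabilityMeasure_bind hP.aemeasurable (ae_of_all _ inferInstance)

lemma bind_iter_succ (hP : Measurable P) (μ : Measure X) (n : ℕ) :
    μ.bind (iter P (n + 1)) = (μ.bind (iter P n)).bind P :=
  (Measure.bind_bind (measurable_iter hP n).aemeasurable hP.aemeasurable).symm

lemma bind_iter_of_bind_eq (hP : Measurable P) {π : Measure X} (hπ : π.bind P = π) :
    ∀ n, π.bind (iter P n) = π
  | 0 => Measure.bind_dirac
  | n + 1 => by rw [bind_iter_succ hP, bind_iter_of_bind_eq hP hπ n, hπ]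

lemma isProbabilityMeasure_inv_natCast_smul_sum {μ : ℕ → Measure X} {n : ℕ} (hn : n ≠ 0)
    (hμ : ∀ j < n, IsProbabilityMeasure (μ j)) :
    IsProbabilityMeasure ((n : ℝ≥0∞)⁻¹ • ∑ j ∈ Finset.range n, μ j) := by
  constructor
  rw [Measure.smul_apply, Measure.finsetSum_apply,
    Finset.sum_congr rfl fun j hj => (hμ j (Finset.mem_range.1 hj)).measure_univ,
    Finset.sum_const, Finset.card_range, nsmul_one, smul_eq_mul,
    ENNReal.inv_mul_cancel (Nat.cast_ne_zero.2 hn) (ENNReal.natCast_ne_top n)]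

end Chain

section Resampling

variable {P : X → Measure X} {a : ℕ → ℕ} {L : ℕ → X → Measure X}

lemma strictMonoOn_Ici_one (ha : ∀ k, 1 ≤ k → a k < a (k + 1)) : StrictMonoOn a (Set.Ici 1) :=
  strictMonoOn_of_lt_succ Set.ordConnected_Ici fun k _ hk _ => by
    simpa using ha k hk

lemma not_exists_eq_of_lt_of_lt (ha : ∀ k, 1 ≤ k → a k < a (k + 1)) {k n : ℕ} (hk : 1 ≤ k)
    (h₁ : a k < n) (h₂ : n < a (k + 1)) : ¬ ∃ j, 1 ≤ j ∧ a j = n := by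
  rintro ⟨j, hj, rfl⟩
  have hmono := strictMonoOn_Ici_one ha
  have hkj : k < j := (hmono.lt_iff_lt (Set.mem_Ici.2 hk) (Set.mem_Ici.2 hj)).1 h₁
  have hjk : j < k + 1 := (hmono.lt_iff_lt (Set.mem_Ici.2 hj) (Set.mem_Ici.2 (by omega))).1 h₂
  omega

lemma isProbabilityMeasure_resampled (hP : Measurable P) [∀ x, IsProbabilityMeasure (P x)]
    (hL0 : ∀ x, L 0 x = Measure.dirac x)
    (hLstep : ∀ n : ℕ, 1 ≤ n → (¬ ∃ k, 1 ≤ k ∧ a k = n) → ∀ x, L n x = (L (n - 1) x).bind P)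
    (hLres : ∀ k, 1 ≤ k →
      ∀ x, L (a k) x = ((a k : ℝ≥0∞))⁻¹ • ∑ j ∈ Finset.range (a k), L j x)
    (n : ℕ) (x : X) : IsProbabilityMeasure (L n x) := by
  induction n using Nat.strong_induction_on with | _ n ih => ?_
  rcases Nat.eq_zero_or_pos n with rfl | hn
  · rw [hL0]; infer_instance
  by_cases hres : ∃ k, 1 ≤ k ∧ a k = n
  · obtain ⟨k, hk, rfl⟩ := hres
    rw [hLres k hk]
    exact isProbabilityMeasure_inv_natCast_smul_sum hn.ne' ih
  · rw [hLstep n hn hres]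
    have := ih (n - 1) (by omega)
    exact isProbabilityMeasure_bind hP.aemeasurable (ae_of_all _ inferInstance)

lemma resampled_add_eq_bind_iter (hP : Measurable P)
    (hLstep : ∀ n : ℕ, 1 ≤ n → (¬ ∃ k, 1 ≤ k ∧ a k = n) → ∀ x, L n x = (L (n - 1) x).bind P)
    {s : ℕ} (x : X) :
    ∀ m, (∀ n, s < n → n ≤ s + m → ¬ ∃ k, 1 ≤ k ∧ a k = n) →
      L (s + m) x = (L s x).bind (iter P m)
  | 0, _ => Measure.bind_dirac.symm
  | m + 1, hfree => by
    rw [bind_iter_succ hP, ← resampled_add_eq_bind_iter hP hLstep x m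
      fun n h₁ h₂ => hfree n h₁ (by omega), hLstep (s + (m + 1)) (by omega)
      (hfree _ (by omega) le_rfl), ← add_assoc, Nat.add_sub_cancel]

lemma sum_range_eq_smul_add_sum_of_eq_avg {μ : ℕ → Measure X} {s t : ℕ} (hs : s ≠ 0)
    (hst : s ≤ t) (havg : μ s = (s : ℝ≥0∞)⁻¹ • ∑ j ∈ Finset.range s, μ j) :
    ∑ j ∈ Finset.range t, μ j = (s : ℝ≥0∞) • μ s + ∑ m ∈ Finset.range (t - s), μ (s + m) := by
  rw [← Finset.sum_range_add_sum_Ico _ hst, Finset.sum_Ico_eq_sum_range, havg, smul_smul,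
    ENNReal.mul_inv_cancel (Nat.cast_ne_zero.2 hs) (ENNReal.natCast_ne_top s), one_smul]

end Resampling

lemma inv_mul_add_geom_sum_le {ρ b : ℝ} (hρ0 : 0 ≤ ρ) (hρ1 : ρ < 1) (hb : 0 ≤ b) {s t : ℕ}
    (ht : 0 < t) (n : ℕ) :
    (t : ℝ)⁻¹ * (s * b + ∑ m ∈ Finset.range n, ρ ^ m * b) ≤
      Real.exp (-(Real.log t - Real.log (1 / (1 - ρ) + s))) * b := by
  have hgeom := geom_sum_Ico_le_of_lt_one (m := 0) (n := n) hρ0 hρ1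
  rw [← Finset.range_eq_Ico, pow_zero] at hgeom
  rw [neg_sub, Real.exp_sub, Real.exp_log (by positivity), Real.exp_log (by positivity),
    ← Finset.sum_mul, div_eq_inv_mul, mul_assoc]
  gcongr
  linarith [mul_le_mul_of_nonneg_right hgeom hb]

/-- Assume `⦀P^n − π⦀_V ≤ ρ^n` for all `n` (Assumption (A) with the constant
absorbed).  Then for every `k ≥ 2`,
`⦀L^(a_k) − π⦀_V ≤ exp(−u_k) ⦀L^(a_{k−1}) − π⦀_V`,
where `u_k = log(a_k) − log(c + a_{k−1})` and `c = 1/(1−ρ)`.  The `V`-norms are expressed by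
testing against all measurable `f` with `|f|_V ≤ 1`: `B` is any upper bound for
`⦀L^(a_{k−1}) − π⦀_V`. -/
theorem vnorm_contraction_at_resampling_times
    (P : X → Measure X) (hPmeas : Measurable P)
    (hPprob : ∀ x, IsProbabilityMeasure (P x))
    (π : Measure X) (hπ : IsProbabilityMeasure π) (hinv : π.bind P = π)
    (V : X → ℝ) (hVmeas : Measurable V) (hV1 : ∀ x, 1 ≤ V x)
    (ρ : ℝ) (hρ0 : 0 < ρ) (hρ1 : ρ < 1)
    -- Assumption (A) with the constant absorbed: `⦀P^n − π⦀_V ≤ ρ^n` for all `n ≥ 0`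
    (hA : ∀ f : X → ℝ, Measurable f → (∀ x, |f x| ≤ V x) →
      ∀ (n : ℕ) (x : X),
        |∫ y, f y ∂(iter P n x) - ∫ y, f y ∂π| ≤ ρ ^ n * V x)
    -- the resampling schedule: a strictly increasing sequence of positive integers
    (a : ℕ → ℕ) (ha1 : 1 ≤ a 1) (hamono : ∀ k, 1 ≤ k → a k < a (k + 1))
    -- the laws `L^(n)(x,·)` of the chain with resampling from the past, burn-in 0
    (L : ℕ → X → Measure X)
    (hL0 : ∀ x, L 0 x = Measure.dirac x)
    (hLstep : ∀ n : ℕ, 1 ≤ n → (¬ ∃ k, 1 ≤ k ∧ a k = n) →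
      ∀ x, L n x = (L (n - 1) x).bind P)
    (hLres : ∀ k, 1 ≤ k →
      ∀ x, L (a k) x = ((a k : ℝ≥0∞))⁻¹ • ∑ j ∈ Finset.range (a k), L j x) :
    ∀ k : ℕ, 2 ≤ k →
      ∀ B : ℝ,
        -- `⦀L^(a_{k−1}) − π⦀_V ≤ B`
        (∀ f : X → ℝ, Measurable f → (∀ x, |f x| ≤ V x) →
          ∀ x, |∫ y, f y ∂(L (a (k - 1)) x) - ∫ y, f y ∂π| ≤ B * V x) →
        -- conclusion: `⦀L^(a_k) − π⦀_V ≤ exp(−u_k) B`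
        ∀ f : X → ℝ, Measurable f → (∀ x, |f x| ≤ V x) →
          ∀ x, |∫ y, f y ∂(L (a k) x) - ∫ y, f y ∂π| ≤
            Real.exp (-(Real.log (a k : ℝ) -
              Real.log (1 / (1 - ρ) + (a (k - 1) : ℝ)))) * B * V x := by
  intro k hk B hB f hf hfV x
  obtain ⟨j, rfl⟩ : ∃ j, k = j + 1 := ⟨k - 1, by omega⟩
  rw [Nat.add_sub_cancel] at hB ⊢
  have hj : 1 ≤ j := by omega
  have hV0 : 0 ≤ V := fun y => zero_le_one.trans (hV1 y)
  have hst : a j < a (j + 1) := hamono j hj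
  have hs : a j ≠ 0 := by
    have := (strictMonoOn_Ici_one hamono).monotoneOn (Set.mem_Ici.2 le_rfl) (Set.mem_Ici.2 hj) hj
    omega
  have := isProbabilityMeasure_resampled hPmeas hL0 hLstep hLres
  have := isProbabilityMeasure_iter hPmeas
  have hiter : ∀ m y, VDistLE V (iter P m y) π (ρ ^ m * V y) :=
    fun m y f hf hfV => hA f hf hfV m y
  have hVπ : Integrable V π := (hiter 0 x).symm.integrable hVmeas hV0
    (integrable_dirac' hVmeas.stronglyMeasurable enorm_lt_top)
  have hLs : VDistLE V (L (a j) x) π (B * V x) := fun f hf hfV => hB f hf hfV x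
  have hblock : ∀ m ∈ Finset.range (a (j + 1) - a j),
      VDistLE V (L (a j + m) x) π (ρ ^ m * (B * V x)) := fun m hm => by
    rw [resampled_add_eq_bind_iter hPmeas hLstep x m fun n h₁ h₂ =>
      not_exists_eq_of_lt_of_lt hamono hj h₁ (by simp at hm; omega)]
    exact hLs.bind (measurable_iter hPmeas m) hVmeas hV0 hVπ (bind_iter_of_bind_eq hPmeas hinv m)
      (pow_pos hρ0 m) (hiter m)
  have hLt : L (a (j + 1)) x = (a (j + 1) : ℝ≥0∞)⁻¹ •
      ((a j : ℝ≥0∞) • L (a j) x + ∑ m ∈ Finset.range (a (j + 1) - a j), L (a j + m) x) := by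
    rw [hLres (j + 1) (by omega), sum_range_eq_smul_add_sum_of_eq_avg hs hst.le (hLres j hj x)]
  have hmix := hLs.inv_smul_natCast_smul_add_sum hst.le (by omega) hblock
    (hLs.integrable hVmeas hV0 hVπ) (fun m hm => (hblock m hm).integrable hVmeas hV0 hVπ) hVπ
  rw [← hLt] at hmix
  refine hmix.mono ?_ f hf hfV
  rw [mul_assoc]
  exact inv_mul_add_geom_sum_le hρ0.le hρ1 (hLs.nonneg hV0) (by omega) _

end ResamplingContraction
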